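/- Fix a real number λ, a nonnegative integer r, and a real number x. In the ring ℝ[[t]] of formal power series over ℝ, the power series 1 − x·(e_λ(t) − 1) has constant term 1, hence is invertible, and (1 − x·(e_λ(t) − 1))⁻¹ · e_λ^r(t) = Σ_{n≥0} ( Σ_{k=0}^{n} x^k · k! · {n+r, k+r}_{r,λ} ) t^n/n!; that is, the degenerate two variable Fubini polynomial evaluated at (x, r) satisfies F_{n,λ}(x|r) = Σ_{k=0}^{n} x^k k! {n+r, k+r}_{r,λ}. -/

import Mathlib

/-!
Write `E = e_λ(t)`. The Vandermonde identity for degenerate falling factorials makes `e_λ^y`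
multiplicative in `y`, so `E^m e_λ^r = e_λ^{m+r}` and the `n`-th coefficient of `(E - 1)^k e_λ^r`
is the `k`-th forward difference at `0` of `m ↦ (m + r)_{n,λ} / n!`. Since
`(m)_k = k! (m choose k)`, the defining expansion of `(m + r)_{n,λ}` is a Newton series in `m`, and
its `k`-th difference at `0` is `k! {n+r,k+r}_{r,λ} / n!`. Finally `E - 1` has no constant term, so
`(1 - x(E - 1))⁻¹ e_λ^r = ∑_k x^k (E - 1)^k e_λ^r`, the `n`-th coefficient only seeing `k ≤ n`.
-/

open Finset PowerSeries

/-- The degenerate falling factorial `(y)_{n,λ} = y(y-λ)(y-2λ)⋯(y-(n-1)λ)`. -/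
noncomputable def degFall (lam y : ℝ) (n : ℕ) : ℝ := ∏ i ∈ Finset.range n, (y - i * lam)

/-- The degenerate exponential `e_λ^y(t) = ∑_{n≥0} (y)_{n,λ} tⁿ/n!` as a formal power series. -/
noncomputable def degExp (lam y : ℝ) : PowerSeries ℝ :=
  PowerSeries.mk fun n => degFall lam y n / (Nat.factorial n : ℝ)

open fwdDiff

section ForwardDifference

variable {M G G' : Type*} [AddCommMonoid M] [AddCommGroup G] [AddCommGroup G']

theorem AddMonoidHom.map_fwdDiff_iter (F : G →+ G') (h : M) (f : M → G) (k : ℕ) (y : M) :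
    F ((Δ_[h])^[k] f y) = (Δ_[h])^[k] (F ∘ f) y := by
  induction k generalizing y with
  | zero => rfl
  | succ k ih => simp only [Function.iterate_succ_apply', fwdDiff, map_sub, ih]

theorem fwdDiff_iter_pow_mul {R : Type*} [CommRing R] (a b : R) (k m : ℕ) :
    (Δ_[1])^[k] (fun m : ℕ ↦ a ^ m * b) m = (a - 1) ^ k * a ^ m * b := by
  induction k generalizing m with
  | zero => simp
  | succ k ih => rw [Function.iterate_succ_apply', fwdDiff, ih, ih]; ring

theorem fwdDiff_iter_sum_choose_smul_zero (a : ℕ → G) {k N : ℕ} (hk : k ≤ N) :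
    (Δ_[1])^[k] (fun m : ℕ ↦ ∑ j ∈ range (N + 1), m.choose j • a j) 0 = a k := by
  calc (Δ_[1])^[k] (fun m : ℕ ↦ ∑ j ∈ range (N + 1), m.choose j • a j) 0
      = ∑ j ∈ range (N + 1), ((Δ_[1])^[k] (fun m ↦ m.choose j : ℕ → ℤ) 0) • a j := by
        simp only [fwdDiff_iter_eq_sum_shift, smul_sum, sum_smul, smul_assoc, Nat.cast_smul_eq_nsmul]
        rw [sum_comm]
    _ = a k := by
        simp [fwdDiff_iter_choose_zero, Nat.lt_succ_iff.mpr hk]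

end ForwardDifference

namespace PowerSeries

variable {R : Type*} [CommRing R]

theorem coeff_pow_mul_eq_zero_of_lt {f : R⟦X⟧} (hf : constantCoeff f = 0) (g : R⟦X⟧)
    {m k : ℕ} (h : m < k) : coeff m (f ^ k * g) = 0 := by
  have hX : X ^ k ∣ f ^ k * g := (pow_dvd_pow_of_dvd (X_dvd_iff.mpr hf) k).mul_right g
  exact X_pow_dvd_iff.mp hX m h

theorem one_sub_mul_mk_sum_coeff_pow_mul {f : R⟦X⟧} (hf : constantCoeff f = 0) (g : R⟦X⟧) :
    (1 - f) * mk (fun n ↦ ∑ k ∈ range (n + 1), coeff n (f ^ k * g)) = g := by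
  ext n
  have htrunc : trunc (n + 1) (mk fun n ↦ ∑ k ∈ range (n + 1), coeff n (f ^ k * g)) =
      trunc (n + 1) (∑ k ∈ range (n + 1), f ^ k * g) := by
    ext m
    simp only [coeff_trunc]
    split_ifs with hm
    · simp only [coeff_mk, map_sum]
      exact sum_subset (range_subset_range.mpr (by omega)) fun k _ hk ↦
        coeff_pow_mul_eq_zero_of_lt hf g (by simpa using hk)
    · rfl
  have hT : (1 - f) * ∑ k ∈ range (n + 1), f ^ k * g = g - f ^ (n + 1) * g := by
    rw [← sum_mul, ← mul_assoc, mul_neg_geom_sum, sub_mul, one_mul]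
  rw [coeff_mul_eq_coeff_trunc_mul_trunc _ _ n.lt_succ_self, htrunc,
    ← coeff_mul_eq_coeff_trunc_mul_trunc _ _ n.lt_succ_self, hT, map_sub,
    coeff_pow_mul_eq_zero_of_lt hf g n.lt_succ_self, sub_zero]

end PowerSeries

open scoped Nat

section Degenerate

variable (lam : ℝ)

theorem degFall_succ (y : ℝ) (n : ℕ) : degFall lam y (n + 1) = degFall lam y n * (y - n * lam) :=
  prod_range_succ _ _

theorem degFall_add (a b : ℝ) (n : ℕ) :
    degFall lam (a + b) n =
      ∑ ij ∈ antidiagonal n, (n.choose ij.1 : ℝ) * (degFall lam a ij.1 * degFall lam b ij.2) := by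
  induction n with
  | zero => simp [degFall]
  | succ n ih =>
    rw [degFall_succ, ih, sum_mul,
      sum_antidiagonal_choose_succ_mul fun i j ↦ degFall lam a i * degFall lam b j,
      ← sum_add_distrib]
    refine sum_congr rfl fun ij hij ↦ ?_
    have hn : (n : ℝ) = ij.1 + ij.2 := by exact_mod_cast (mem_antidiagonal.mp hij).symm
    rw [Nat.choose_symm_of_eq_add (mem_antidiagonal.mp hij).symm, degFall_succ, degFall_succ, hn]
    ring

theorem degExp_mul (a b : ℝ) : degExp lam a * degExp lam b = degExp lam (a + b) := by
  ext n
  simp only [degExp, coeff_mul, coeff_mk, degFall_add, sum_div]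
  refine sum_congr rfl fun ij hij ↦ ?_
  rw [← mem_antidiagonal.mp hij, Nat.cast_add_choose]
  field_simp

theorem degExp_one_pow_mul (m : ℕ) (y : ℝ) :
    degExp lam 1 ^ m * degExp lam y = degExp lam (m + y) := by
  induction m with
  | zero => simp
  | succ m ih =>
    rw [pow_succ', mul_assoc, ih, degExp_mul]
    congr 1
    push_cast
    ring

theorem constantCoeff_degExp (y : ℝ) : constantCoeff (degExp lam y) = 1 := by
  simp [degExp, degFall]

theorem degFall_one_natCast (m i : ℕ) : degFall 1 m i = (i ! * m.choose i : ℕ) := by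
  rw [← Nat.descFactorial_eq_factorial_mul_choose, ← descPochhammer_eval_eq_descFactorial,
    descPochhammer_eval_eq_prod_range]
  simp [degFall]

theorem coeff_degExp_sub_one_pow_mul {r : ℕ} {S2 : ℕ → ℕ → ℝ}
    (hS2 : ∀ (n : ℕ) (y : ℝ), degFall lam (y + r) n = ∑ k ∈ range (n + 1), S2 n k * degFall 1 y k)
    {n k : ℕ} (hk : k ≤ n) :
    coeff n ((degExp lam 1 - 1) ^ k * degExp lam r) = k ! * S2 n k / n ! := by
  have hNewton : ∀ m : ℕ, coeff n (degExp lam 1 ^ m * degExp lam r) =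
      ∑ j ∈ range (n + 1), m.choose j • (j ! * S2 n j / n !) := by
    intro m
    rw [degExp_one_pow_mul]
    simp only [degExp, coeff_mk, hS2, degFall_one_natCast, sum_div, nsmul_eq_mul]
    refine sum_congr rfl fun j _ ↦ ?_
    push_cast
    ring
  have hpow := fwdDiff_iter_pow_mul (degExp lam 1) (degExp lam r) k 0
  rw [pow_zero, mul_one] at hpow
  rw [← hpow, ← LinearMap.toAddMonoidHom_coe, AddMonoidHom.map_fwdDiff_iter]
  simp only [Function.comp_def, LinearMap.toAddMonoidHom_coe, hNewton]
  exact fwdDiff_iter_sum_choose_smul_zero _ hk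

end Degenerate

/-- In `ℝ⟦t⟧`, the series `1 − x(e_λ(t) − 1)` has constant term `1` (hence is a unit), and
`(1 − x(e_λ(t) − 1))⁻¹ e_λ^r(t) = ∑_{n≥0} (∑_{k=0}^{n} x^k k! {n+r,k+r}_{r,λ}) tⁿ/n!`;
i.e. the degenerate two variable Fubini polynomials satisfy
`F_{n,λ}(x|r) = ∑_{k=0}^{n} x^k k! {n+r,k+r}_{r,λ}`. -/
theorem degenerate_fubini_generating (lam : ℝ) (r : ℕ) (x : ℝ) (S2 : ℕ → ℕ → ℝ)
    (hS2 : ∀ (n : ℕ) (y : ℝ),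
      degFall lam (y + r) n = ∑ k ∈ range (n + 1), S2 n k * degFall 1 y k) :
    constantCoeff (1 - PowerSeries.C x * (degExp lam 1 - 1)) = 1 ∧
    (1 - PowerSeries.C x * (degExp lam 1 - 1))⁻¹ * degExp lam r
      = PowerSeries.mk fun n =>
          (∑ k ∈ range (n + 1), x ^ k * (Nat.factorial k : ℝ) * S2 n k) /
            (Nat.factorial n : ℝ) := by
  have hf : constantCoeff (PowerSeries.C x * (degExp lam 1 - 1)) = 0 := by
    simp [constantCoeff_degExp]
  have hunit : constantCoeff (1 - PowerSeries.C x * (degExp lam 1 - 1)) = 1 := by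
    simp [hf]
  refine ⟨hunit, ?_⟩
  rw [← one_sub_mul_mk_sum_coeff_pow_mul hf (degExp lam r), ← mul_assoc,
    PowerSeries.inv_mul_cancel _ (by simp [hunit]), one_mul]
  ext n
  simp only [coeff_mk, sum_div]
  refine sum_congr rfl fun k hk ↦ ?_
  rw [mul_pow, ← map_pow, mul_assoc, coeff_C_mul,
    coeff_degExp_sub_one_pow_mul lam hS2 (Nat.lt_succ_iff.mp (mem_range.mp hk))]
  ring
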